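/- Let y be a grid in ℝ^d. If inf{‖w‖_∞ : a ∈ A_{d+1}^+, w ∈ a·τ_y, w ≠ 0} = 0, i.e., the lattices in the orbit A_{d+1}^+·τ_y contain arbitrarily short nonzero vectors (equivalently, by Mahler's compactness criterion, the orbit A_{d+1}^+·τ_y is unbounded in X_{d+1}), then y is L. -/

import Mathlib

open scoped BigOperators

noncomputable section

/-- `SL_d(ℝ)`. -/
abbrev SLd (d : ℕ) := Matrix.SpecialLinearGroup (Fin d) ℝ

/-- The unimodular lattice `gℤ^d ⊆ ℝ^d`. -/
def latticeOf {d : ℕ} (g : SLd d) : Set (Fin d → ℝ) :=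
  Set.range fun m : Fin d → ℤ => (g : Matrix (Fin d) (Fin d) ℝ).mulVec fun i => (m i : ℝ)

/-- A unimodular lattice in `ℝ^d` is a set of the form `gℤ^d` for some `g ∈ SL_d(ℝ)`. -/
def IsUnimodularLattice {d : ℕ} (x : Set (Fin d → ℝ)) : Prop :=
  ∃ g : SLd d, x = latticeOf g

/-- The grid `x + v`. -/
def grid {d : ℕ} (x : Set (Fin d → ℝ)) (v : Fin d → ℝ) : Set (Fin d → ℝ) :=
  (fun u => u + v) '' x

/-- `N(y) = inf {|∏ i, w i| : w ∈ y}`. -/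
def Ngrid {d : ℕ} (y : Set (Fin d → ℝ)) : ℝ :=
  sInf {r : ℝ | ∃ w ∈ y, r = |∏ i, w i|}

/-- The grid `x + v` is L (Littlewood): `inf {|n|·N(x + nv) : n ∈ ℤ, n ≠ 0} = 0`. -/
def IsL {d : ℕ} (x : Set (Fin d → ℝ)) (v : Fin d → ℝ) : Prop :=
  sInf {r : ℝ | ∃ n : ℤ, n ≠ 0 ∧ r = |(n : ℝ)| * Ngrid (grid x ((n : ℝ) • v))} = 0

/-- The grid `x + v` is FL (L of finite type): `N(x + nv) = 0` for some nonzero integer `n`. -/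
def IsFL {d : ℕ} (x : Set (Fin d → ℝ)) (v : Fin d → ℝ) : Prop :=
  ∃ n : ℤ, n ≠ 0 ∧ Ngrid (grid x ((n : ℝ) • v)) = 0

/-- A lattice `x` is GL if every grid `x + v` is L. -/
def IsGL {d : ℕ} (x : Set (Fin d → ℝ)) : Prop := ∀ v : Fin d → ℝ, IsL x v

/-- A lattice `x` is GFL if every grid `x + v` is FL. -/
def IsGFL {d : ℕ} (x : Set (Fin d → ℝ)) : Prop := ∀ v : Fin d → ℝ, IsFL x v

/-- For the grid `y = x + v`, `τ_y = {(u + tv, t) : u ∈ x, t ∈ ℤ} ⊆ ℝ^{d+1}`. -/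
def tauSet {d : ℕ} (x : Set (Fin d → ℝ)) (v : Fin d → ℝ) : Set (Fin (d + 1) → ℝ) :=
  {w | ∃ u ∈ x, ∃ t : ℤ,
    (∀ i : Fin d, w i.castSucc = u i + (t : ℝ) * v i) ∧ w (Fin.last d) = (t : ℝ)}

/-- `a ∈ A_{d+1}^+`: a diagonal matrix `diag(e^{t_1}, …, e^{t_{d+1}})` with
`t_1, …, t_d > 0` and `t_1 + … + t_{d+1} = 0`. -/
def IsAPlus {d : ℕ} (a : Matrix (Fin (d + 1)) (Fin (d + 1)) ℝ) : Prop :=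
  a.det = 1 ∧ (∀ i j, i ≠ j → a i j = 0) ∧ (∀ i, 0 < a i i) ∧
    ∀ i : Fin (d + 1), (i : ℕ) < d → 1 < a i i

open scoped Matrix

lemma one_le_norm_intCast {ι : Type*} [Fintype ι] {m : ι → ℤ} (hm : m ≠ 0) :
    1 ≤ ‖fun i => (m i : ℝ)‖ := by
  obtain ⟨i, hi⟩ := Function.ne_iff.mp hm
  calc (1 : ℝ) ≤ |(m i : ℝ)| := by exact_mod_cast Int.one_le_abs hi
    _ ≤ ‖fun i => (m i : ℝ)‖ := norm_le_pi_norm (fun i => (m i : ℝ)) i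

lemma zero_mem_latticeOf {d : ℕ} (g : SLd d) : (0 : Fin d → ℝ) ∈ latticeOf g :=
  ⟨0, by simp [← Pi.zero_def]⟩

lemma exists_pos_le_norm_of_mem_latticeOf {d : ℕ} (g : SLd d) :
    ∃ r > 0, ∀ p ∈ latticeOf g, p ≠ 0 → r ≤ ‖p‖ := by
  set f : (Fin d → ℝ) →L[ℝ] (Fin d → ℝ) :=
    LinearMap.toContinuousLinearMap (g⁻¹ : SLd d).1.mulVecLin
  refine ⟨1 / (‖f‖ + 1), by positivity, ?_⟩
  rintro _ ⟨m, rfl⟩ hp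
  set q : Fin d → ℝ := fun i => m i
  have hm : m ≠ 0 := by rintro rfl; simp [← Pi.zero_def] at hp
  have hfg : f (g.1 *ᵥ q) = q := by
    simp [f, Matrix.mulVec_mulVec, Matrix.SpecialLinearGroup.coe_inv, Matrix.adjugate_mul, g.2]
  have h1 : 1 ≤ ‖f‖ * ‖g.1 *ᵥ q‖ :=
    calc 1 ≤ ‖q‖ := one_le_norm_intCast hm
      _ = ‖f (g.1 *ᵥ q)‖ := by rw [hfg]
      _ ≤ ‖f‖ * ‖g.1 *ᵥ q‖ := f.le_opNorm _
  rw [div_le_iff₀ (by positivity)]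
  nlinarith [norm_nonneg (g.1 *ᵥ q)]

lemma abs_prod_le_norm_pow {n : ℕ} (w : Fin n → ℝ) : |∏ i, w i| ≤ ‖w‖ ^ n := by
  calc |∏ i, w i| = ∏ i, ‖w i‖ := by simp [Finset.abs_prod]
    _ ≤ ∏ _i : Fin n, ‖w‖ :=
      Finset.prod_le_prod (fun i _ => norm_nonneg _) (fun i _ => norm_le_pi_norm w i)
    _ = ‖w‖ ^ n := by simp

section Ngrid

variable {d : ℕ}

lemma Ngrid_nonneg (y : Set (Fin d → ℝ)) : 0 ≤ Ngrid y :=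
  Real.sInf_nonneg (by rintro r ⟨w, -, rfl⟩; exact abs_nonneg _)

lemma Ngrid_le_abs_prod {y : Set (Fin d → ℝ)} {w : Fin d → ℝ} (hw : w ∈ y) :
    Ngrid y ≤ |∏ i, w i| :=
  csInf_le ⟨0, by rintro r ⟨w, -, rfl⟩; exact abs_nonneg _⟩ ⟨w, hw, rfl⟩

lemma isL_of_forall_exists_lt {x : Set (Fin d → ℝ)} {v : Fin d → ℝ}
    (H : ∀ ε > 0, ∃ n : ℤ, n ≠ 0 ∧ |(n : ℝ)| * Ngrid (grid x ((n : ℝ) • v)) < ε) :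
    IsL x v := by
  have hT : ∀ r ∈ {r : ℝ | ∃ n : ℤ, n ≠ 0 ∧ r = |(n : ℝ)| * Ngrid (grid x ((n : ℝ) • v))},
      0 ≤ r := by
    rintro r ⟨n, -, rfl⟩
    exact mul_nonneg (abs_nonneg _) (Ngrid_nonneg _)
  refine le_antisymm (le_of_forall_pos_lt_add fun ε hε => ?_) (Real.sInf_nonneg hT)
  obtain ⟨n, hn, hlt⟩ := H ε hε
  exact (csInf_le ⟨0, hT⟩ ⟨n, hn, rfl⟩).trans_lt (by simpa using hlt)

end Ngrid

section tauSet

variable {d : ℕ} {x : Set (Fin d → ℝ)} {v : Fin d → ℝ}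

lemma snoc_one_mem_tauSet (hx : (0 : Fin d → ℝ) ∈ x) : Fin.snoc v 1 ∈ tauSet x v :=
  ⟨0, hx, 1, fun i => by simp, by simp⟩

lemma exists_init_mem_grid_of_mem_tauSet {u : Fin (d + 1) → ℝ} (hu : u ∈ tauSet x v) :
    ∃ t : ℤ, u (Fin.last d) = t ∧ Fin.init u ∈ grid x ((t : ℝ) • v) := by
  obtain ⟨p, hp, t, hinit, hlast⟩ := hu
  refine ⟨t, hlast, p, hp, funext fun i => ?_⟩
  simp [Fin.init, hinit i]

end tauSet

namespace IsAPlus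

variable {d : ℕ} {a : Matrix (Fin (d + 1)) (Fin (d + 1)) ℝ}

lemma eq_diagonal (ha : IsAPlus a) : a = Matrix.diagonal fun i => a i i := by
  ext i j
  by_cases hij : i = j
  · simp [hij]
  · simp [Matrix.diagonal_apply_ne _ hij, ha.2.1 i j hij]

lemma mulVec_apply (ha : IsAPlus a) (u : Fin (d + 1) → ℝ) (i : Fin (d + 1)) :
    (a *ᵥ u) i = a i i * u i := by
  rw [ha.eq_diagonal, Matrix.mulVec_diagonal]
  simp

lemma prod_diag (ha : IsAPlus a) : ∏ i, a i i = 1 := by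
  simpa [← Matrix.det_diagonal, ← ha.eq_diagonal] using ha.1

lemma abs_prod_mulVec (ha : IsAPlus a) (u : Fin (d + 1) → ℝ) :
    |∏ i, (a *ᵥ u) i| = |∏ i, u i| := by
  simp [ha.mulVec_apply, Finset.prod_mul_distrib, ha.prod_diag]

lemma norm_init_le (ha : IsAPlus a) (u : Fin (d + 1) → ℝ) : ‖Fin.init u‖ ≤ ‖a *ᵥ u‖ := by
  refine pi_norm_le_iff_of_nonneg (norm_nonneg _) |>.mpr fun i => ?_
  calc ‖Fin.init u i‖ = |u i.castSucc| := rfl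
    _ ≤ a i.castSucc i.castSucc * |u i.castSucc| :=
      le_mul_of_one_le_left (abs_nonneg _) (ha.2.2.2 _ (by simp)).le
    _ = ‖(a *ᵥ u) i.castSucc‖ := by
      rw [ha.mulVec_apply, Real.norm_eq_abs, abs_mul, abs_of_pos (ha.2.2.1 _)]
    _ ≤ ‖a *ᵥ u‖ := norm_le_pi_norm _ _

end IsAPlus

lemma isAPlus_diagonal_two (d : ℕ) :
    IsAPlus (Matrix.diagonal fun i : Fin (d + 1) => if (i : ℕ) < d then (2 : ℝ) else 2⁻¹ ^ d) := by
  refine ⟨?_, fun i j hij => Matrix.diagonal_apply_ne _ hij, fun i => ?_, fun i hi => ?_⟩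
  · simp [Matrix.det_diagonal, Fin.prod_univ_castSucc]
  · simp only [Matrix.diagonal_apply_eq]
    split <;> positivity
  · simp [hi]

lemma exists_isAPlus_mulVec_ne_zero {d : ℕ} (g : SLd d) (v : Fin d → ℝ) :
    ∃ a : Matrix (Fin (d + 1)) (Fin (d + 1)) ℝ, IsAPlus a ∧
      ∃ u ∈ tauSet (latticeOf g) v, a *ᵥ u ≠ 0 := by
  refine ⟨_, isAPlus_diagonal_two d, _, snoc_one_mem_tauSet (zero_mem_latticeOf g), fun h0 => ?_⟩
  simpa [Matrix.mulVec_diagonal] using congrFun h0 (Fin.last d)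

/-- Since `a` is diagonal of determinant one, `|N(a(w, t))| = |N(w, t)| = |t|·|N(w)|`. -/
lemma abs_mul_Ngrid_le_norm_pow {d : ℕ} {x : Set (Fin d → ℝ)} {v : Fin d → ℝ}
    {a : Matrix (Fin (d + 1)) (Fin (d + 1)) ℝ} (ha : IsAPlus a) {u : Fin (d + 1) → ℝ}
    {t : ℤ} (ht : u (Fin.last d) = t) (hu : Fin.init u ∈ grid x ((t : ℝ) • v)) :
    |(t : ℝ)| * Ngrid (grid x ((t : ℝ) • v)) ≤ ‖a *ᵥ u‖ ^ (d + 1) :=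
  calc |(t : ℝ)| * Ngrid (grid x ((t : ℝ) • v))
      ≤ |(t : ℝ)| * |∏ i, Fin.init u i| := by gcongr; exact Ngrid_le_abs_prod hu
    _ = |∏ i, (a *ᵥ u) i| := by
      rw [ha.abs_prod_mulVec, Fin.prod_univ_castSucc, ht, abs_mul, mul_comm]; rfl
    _ ≤ ‖a *ᵥ u‖ ^ (d + 1) := abs_prod_le_norm_pow _

/-- A short vector `a(w, t)` with `t = 0` would give a short nonzero vector `w` of the lattice
itself; hence `t ≠ 0`, and the bound on `|t|·N(ty)` above shows that `y` is L. -/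
theorem stmt_8_general (d : ℕ) (g : SLd d) (v : Fin d → ℝ)
    (h : sInf {r : ℝ | ∃ a : Matrix (Fin (d + 1)) (Fin (d + 1)) ℝ, IsAPlus a ∧
        ∃ u ∈ tauSet (latticeOf g) v, a.mulVec u ≠ 0 ∧ r = ‖a.mulVec u‖} = 0) :
    IsL (latticeOf g) v := by
  obtain ⟨r, hr, hdisc⟩ := exists_pos_le_norm_of_mem_latticeOf g
  obtain ⟨a₀, ha₀, u₀, hu₀, hau₀⟩ := exists_isAPlus_mulVec_ne_zero g v
  refine isL_of_forall_exists_lt fun ε hε => ?_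
  obtain ⟨_, ⟨a, ha, u, hu, hau, rfl⟩, hlt⟩ :=
    exists_lt_of_csInf_lt (by exact ⟨_, a₀, ha₀, u₀, hu₀, hau₀, rfl⟩)
      (h.le.trans_lt (lt_min (lt_min hε one_pos) hr))
  obtain ⟨⟨hltε, hlt1⟩, hltr⟩ := lt_min_iff.mp hlt |>.imp_left lt_min_iff.mp
  obtain ⟨t, ht, hgrid⟩ := exists_init_mem_grid_of_mem_tauSet hu
  have ht0 : t ≠ 0 := by
    rintro rfl
    have hinit : Fin.init u ≠ 0 := fun h0 => hau <| by
      rw [show u = 0 from funext fun i => Fin.lastCases (by simpa using ht) (congrFun h0) i,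
        Matrix.mulVec_zero]
    exact (hdisc _ (by simpa [grid] using hgrid) hinit).not_gt
      ((IsAPlus.norm_init_le ha u).trans_lt hltr)
  refine ⟨t, ht0, ?_⟩
  calc |(t : ℝ)| * Ngrid (grid (latticeOf g) ((t : ℝ) • v))
      ≤ ‖a *ᵥ u‖ ^ (d + 1) := abs_mul_Ngrid_le_norm_pow ha ht hgrid
    _ ≤ ‖a *ᵥ u‖ := pow_le_of_le_one (norm_nonneg _) hlt1.le d.succ_ne_zero
    _ < ε := hltε

/-- If the lattices in the orbit `A_{d+1}^+ · τ_y` contain arbitrarily short nonzero vectors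
(in the sup norm), then `y` is L. -/
theorem stmt_8 (d : ℕ) (hd : 2 ≤ d) (g : SLd d) (v : Fin d → ℝ)
    (h : sInf {r : ℝ | ∃ a : Matrix (Fin (d + 1)) (Fin (d + 1)) ℝ, IsAPlus a ∧
        ∃ u ∈ tauSet (latticeOf g) v, a.mulVec u ≠ 0 ∧ r = ‖a.mulVec u‖} = 0) :
    IsL (latticeOf g) v :=
  stmt_8_general d g v h

end
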